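/- arXiv:2307.01626 — 2 statements merged into one kernel-verified Lean document; each statement's English description precedes it below -/
import Mathlib

section
/- For any finite simple graph G, the largest eigenvalue λ₁ of its Laplacian matrix satisfies λ₁ ≤ max{ d_i + d_j - |N_i ∩ N_j| : (v_i, v_j) ∈ E }, where d_i is the degree of v_i and N_i is the neighborhood of v_i. -/
/-- `c` is an eigenvalue of the matrix `M`. -/
def Matrix.HasEigenvalue' {n : ℕ} (M : Matrix (Fin n) (Fin n) ℝ) (c : ℝ) : Prop :=
  ∃ v : Fin n → ℝ, v ≠ 0 ∧ M.mulVec v = c • v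

theorem laplacian_eigenvalue_edge_bound
    {n : ℕ} (G : SimpleGraph (Fin n)) [DecidableRel G.Adj]
    (hE : ∃ i j : Fin n, G.Adj i j)
    (lam : ℝ) (hlam : (G.lapMatrix ℝ).HasEigenvalue' lam) :
    ∃ i j : Fin n, G.Adj i j ∧
      lam ≤ (G.degree i : ℝ) + (G.degree j : ℝ)
        - ((G.neighborFinset i ∩ G.neighborFinset j).card : ℝ) := by
  classical
  obtain ⟨x, hx0, hx⟩ := hlam
  set s : Finset (Fin n × Fin n) := Finset.univ.filter (fun p => G.Adj p.1 p.2) with hs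
  have hsne : s.Nonempty := by
    obtain ⟨i, j, hij⟩ := hE
    exact ⟨(i, j), by simp [hs, hij]⟩
  obtain ⟨p, hp, hmaxp⟩ := s.exists_max_image (fun p => x p.1 - x p.2) hsne
  obtain ⟨u, v⟩ := p
  have huv : G.Adj u v := by simpa [hs] using hp
  set m := x u - x v with hm
  have hmax : ∀ a b, G.Adj a b → x a - x b ≤ m := fun a b hab =>
    hmaxp (a, b) (by simp [hs, hab])
  have hm0 : 0 ≤ m := by
    have := hmax v u huv.symm
    linarith
  -- key identity: (L x) a = ∑_{w ~ a} (x a - x w)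
  have hL : ∀ a, lam * x a = ∑ w ∈ G.neighborFinset a, (x a - x w) := by
    intro a
    have h1 : (G.lapMatrix ℝ).mulVec x a = lam * x a := by
      rw [hx]; simp
    rw [← h1, SimpleGraph.lapMatrix_mulVec_apply]
    rw [Finset.sum_sub_distrib, Finset.sum_const, nsmul_eq_mul,
      SimpleGraph.card_neighborFinset_eq_degree]
  rcases eq_or_lt_of_le hm0 with hmz | hmpos
  · -- m = 0 : eigenvector constant on edges ⇒ lam = 0
    have hall : ∀ a b, G.Adj a b → x a = x b := by
      intro a b hab
      have h1 := hmax a b hab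
      have h2 := hmax b a hab.symm
      rw [← hmz] at h1 h2
      linarith
    have hlam0 : lam = 0 := by
      by_contra hne
      apply hx0
      funext a
      have := hL a
      have hz : ∑ w ∈ G.neighborFinset a, (x a - x w) = 0 := by
        apply Finset.sum_eq_zero
        intro w hw
        rw [sub_eq_zero]
        exact hall a w ((SimpleGraph.mem_neighborFinset _ _ _).mp hw)
      have : lam * x a = 0 := by rw [this, hz]
      simpa [hne] using mul_eq_zero.mp this
    obtain ⟨i, j, hij⟩ := hE
    refine ⟨i, j, hij, ?_⟩
    have hsub : G.neighborFinset i ∩ G.neighborFinset j ⊆ G.neighborFinset i :=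
      Finset.inter_subset_left
    have hcard : ((G.neighborFinset i ∩ G.neighborFinset j).card : ℝ) ≤ G.degree i := by
      rw [← SimpleGraph.card_neighborFinset_eq_degree]
      exact_mod_cast Finset.card_le_card hsub
    have : (0:ℝ) ≤ G.degree j := by positivity
    rw [hlam0]; linarith
  · -- m > 0
    refine ⟨u, v, huv, ?_⟩
    set Nu := G.neighborFinset u with hNu
    set Nv := G.neighborFinset v with hNv
    set c := (Nu ∩ Nv).card with hc
    have key : lam * m ≤ ((G.degree u : ℝ) + G.degree v - c) * m := by
      have hmul : lam * m = (∑ w ∈ Nu, (x u - x w)) + ∑ w ∈ Nv, (x w - x v) := by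
        have h1 := hL u
        have h2 := hL v
        have : ∑ w ∈ Nv, (x w - x v) = -(lam * x v) := by
          rw [h2, ← Finset.sum_neg_distrib]
          apply Finset.sum_congr rfl
          intro w _; ring
        rw [hm, mul_sub, h1, this]
        ring
      have hsplitu := Finset.sum_inter_add_sum_sdiff Nu Nv (fun w => x u - x w)
      have hsplitv := Finset.sum_inter_add_sum_sdiff Nv Nu (fun w => x w - x v)
      rw [Finset.inter_comm] at hsplitv
      have hcardu : (((Nu \ Nv).card : ℝ)) = (G.degree u : ℝ) - c := by
        have h2 : (Nu \ Nv).card + c = G.degree u := by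
          rw [hc, Finset.card_sdiff_add_card_inter, hNu,
            SimpleGraph.card_neighborFinset_eq_degree]
        have h3 := congrArg (Nat.cast : ℕ → ℝ) h2
        push_cast at h3
        linarith
      have hcardv : (((Nv \ Nu).card : ℝ)) = (G.degree v : ℝ) - c := by
        have h2 : (Nv \ Nu).card + c = G.degree v := by
          rw [hc, Finset.inter_comm, Finset.card_sdiff_add_card_inter, hNv,
            SimpleGraph.card_neighborFinset_eq_degree]
        have h3 := congrArg (Nat.cast : ℕ → ℝ) h2
        push_cast at h3
        linarith
      have hbound1 : ∑ w ∈ Nu \ Nv, (x u - x w) ≤ ((G.degree u : ℝ) - c) * m := by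
        rw [← hcardu, ← nsmul_eq_mul]
        apply Finset.sum_le_card_nsmul
        intro w hw
        exact hmax u w ((SimpleGraph.mem_neighborFinset _ _ _).mp (Finset.mem_sdiff.mp hw).1)
      have hbound2 : ∑ w ∈ Nv \ Nu, (x w - x v) ≤ ((G.degree v : ℝ) - c) * m := by
        rw [← hcardv, ← nsmul_eq_mul]
        apply Finset.sum_le_card_nsmul
        intro w hw
        exact hmax w v ((SimpleGraph.mem_neighborFinset _ _ _).mp
          (Finset.mem_sdiff.mp hw).1).symm
      have hinter : (∑ w ∈ Nu ∩ Nv, (x u - x w)) + ∑ w ∈ Nu ∩ Nv, (x w - x v)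
          = (c : ℝ) * m := by
        rw [← Finset.sum_add_distrib]
        have hterm : ∀ w ∈ Nu ∩ Nv, (x u - x w) + (x w - x v) = m := by
          intro w _; rw [hm]; ring
        rw [Finset.sum_congr rfl hterm, Finset.sum_const, nsmul_eq_mul, hc]
      have heq : ((G.degree u : ℝ) - c) * m + ((G.degree v : ℝ) - c) * m + (c : ℝ) * m
          = ((G.degree u : ℝ) + (G.degree v : ℝ) - (c : ℝ)) * m := by ring
      linarith
    exact le_of_mul_le_mul_right key hmpos
end

section
/- In the competing model on any finite site graph G, with probability one only finitely many fights occur; i.e., there exists a random finite time T such that no fight occurs at any time t ≥ T. -/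
open MeasureTheory

theorem competing_model_finitely_many_fights
    {Ω : Type*} {m0 : MeasurableSpace Ω} {μ : Measure Ω} [IsProbabilityMeasure μ]
    (ℱ : Filtration ℕ m0) {n : ℕ} (hn : 0 < n)
    (A : ℕ → Set Ω)                 -- event that a fight occurs at time t
    (Z : ℕ → Ω → ℝ) (M : ℝ)
    (hsub : Submartingale Z ℱ μ)
    (hbdd : ∀ t : ℕ, ∀ᵐ ω ∂μ, |Z t ω| ≤ M)
    (hA : ∀ t, MeasurableSet (A t))
    (hdrift : ∀ t : ℕ, 4 * (n : ℝ) * (μ (A t)).toReal ≤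
      (∫ ω, Z (t + 1) ω ∂μ) - ∫ ω, Z t ω ∂μ) :
    ∀ᵐ ω ∂μ, ∃ T : ℕ, ∀ t : ℕ, T ≤ t → ω ∉ A t := by
  have hnpos : (0 : ℝ) < 4 * n := by positivity
  -- bound on integrals
  have hint : ∀ t : ℕ, |∫ ω, Z t ω ∂μ| ≤ M := by
    intro t
    calc |∫ ω, Z t ω ∂μ| ≤ ∫ ω, |Z t ω| ∂μ := by
          simpa [Real.norm_eq_abs] using norm_integral_le_integral_norm (fun ω => Z t ω) (μ := μ)
      _ ≤ ∫ _, M ∂μ := by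
          refine integral_mono_ae ((hsub.integrable t).abs) (integrable_const M) (hbdd t)
      _ = M := by simp
  -- partial sums bound
  have hpartial : ∀ N : ℕ, ∑ t ∈ Finset.range N, (μ (A t)).toReal ≤ (2 * M) / (4 * n) := by
    intro N
    rw [le_div_iff₀ hnpos, mul_comm]
    calc (4 * (n:ℝ)) * ∑ t ∈ Finset.range N, (μ (A t)).toReal
        = ∑ t ∈ Finset.range N, 4 * (n:ℝ) * (μ (A t)).toReal := Finset.mul_sum _ _ _
      _ ≤ ∑ t ∈ Finset.range N, ((∫ ω, Z (t + 1) ω ∂μ) - ∫ ω, Z t ω ∂μ) :=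
          Finset.sum_le_sum fun t _ => hdrift t
      _ = (∫ ω, Z N ω ∂μ) - ∫ ω, Z 0 ω ∂μ := Finset.sum_range_sub (fun t => ∫ ω, Z t ω ∂μ) N
      _ ≤ |∫ ω, Z N ω ∂μ| + |∫ ω, Z 0 ω ∂μ| := by
          have := abs_sub_abs_le_abs_sub (∫ ω, Z N ω ∂μ) (∫ ω, Z 0 ω ∂μ)
          have h1 := le_abs_self ((∫ ω, Z N ω ∂μ) - ∫ ω, Z 0 ω ∂μ)
          have h2 := abs_sub ((∫ ω, Z N ω ∂μ)) (∫ ω, Z 0 ω ∂μ)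
          linarith [le_abs_self (∫ ω, Z N ω ∂μ), neg_abs_le (∫ ω, Z 0 ω ∂μ)]
      _ ≤ 2 * M := by linarith [hint N, hint 0]
  -- tsum of measures is finite
  have htsum : ∑' t, μ (A t) ≠ ⊤ := by
    have hfin : ∀ t, μ (A t) ≠ ⊤ := fun t => measure_ne_top μ _
    have hle : ∑' t, μ (A t) ≤ ENNReal.ofReal ((2 * M) / (4 * n)) := by
      rw [ENNReal.tsum_eq_iSup_sum]
      refine iSup_le fun s => ?_
      obtain ⟨N, hN⟩ : ∃ N, s ⊆ Finset.range N :=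
        ⟨(s.sup id) + 1, fun x hx => Finset.mem_range.2 (Nat.lt_succ_of_le (Finset.le_sup (f := id) hx))⟩
      calc ∑ t ∈ s, μ (A t) ≤ ∑ t ∈ Finset.range N, μ (A t) :=
            Finset.sum_le_sum_of_subset hN
        _ = ENNReal.ofReal (∑ t ∈ Finset.range N, (μ (A t)).toReal) := by
            rw [ENNReal.ofReal_sum_of_nonneg (fun t _ => ENNReal.toReal_nonneg)]
            exact Finset.sum_congr rfl fun t _ => (ENNReal.ofReal_toReal (hfin t)).symm
        _ ≤ ENNReal.ofReal ((2 * M) / (4 * n)) := ENNReal.ofReal_le_ofReal (hpartial N)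
    exact ne_top_of_le_ne_top ENNReal.ofReal_ne_top hle
  filter_upwards [MeasureTheory.ae_eventually_notMem htsum] with ω hω
  exact Filter.eventually_atTop.1 hω
end
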